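/- arXiv:0909.5280 — 2 statements merged into one kernel-verified Lean document; each statement's English description precedes it below -/
import Mathlib

section
/- For a prime ℓ, the number of matrices A in GL₂(𝔽_ℓ) with det(I - A) = 0 equals (ℓ-2)(ℓ²+ℓ) + ℓ². -/
/-!
Substituting `B = 1 - A`, there are as many matrices with `det (1 - A) = 0` as singular ones,
namely `q⁴ - |GL₂(𝔽_q)|`. Since `det (1 - A) = 1 - tr A + det A`, the singular ones among them are
those with `det A = 0` and `tr A = 1`, i.e. `!![a, b; c, 1 - a]` with `b * c = a * (1 - a)`.
The equation `b * c = t` has `q - 1` solutions, plus `q` more when `t = 0`, and `a * (1 - a)`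
vanishes for two values of `a`, so there are `q² + q` of them. The count is therefore
`q⁴ - (q² - 1)(q² - q) - (q² + q) = q³ - 2q`.
-/

open Finset

theorem Finset.card_filter_prod_eq_sum {α β : Type*} [Fintype α] [Fintype β] (P : α → β → Prop)
    [∀ a b, Decidable (P a b)] : #{x : α × β | P x.1 x.2} = ∑ a, #{b | P a b} := by
  simp only [card_filter, Fintype.sum_prod_type]

namespace Matrix

theorem isUnit_iff_det_ne_zero {n K : Type*} [Fintype n] [DecidableEq n] [Field K]
    (A : Matrix n n K) : IsUnit A ↔ A.det ≠ 0 :=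
  A.isUnit_iff_isUnit_det.trans isUnit_iff_ne_zero

theorem det_one_sub_fin_two {R : Type*} [CommRing R] (A : Matrix (Fin 2) (Fin 2) R) :
    (1 - A).det = 1 - A.trace + A.det := by
  simp only [det_fin_two, trace_fin_two, sub_apply, one_apply_eq, one_apply_ne zero_ne_one,
    one_apply_ne one_ne_zero]
  ring

end Matrix

variable {K : Type*} [Field K] [Fintype K]

local notation "q" => Fintype.card K

theorem Matrix.card_GL_fin_two :
    (Nat.card (GL (Fin 2) K) : ℤ) = ((q : ℤ) ^ 2 - 1) * ((q : ℤ) ^ 2 - q) := by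
  rw [card_GL_field, Fin.prod_univ_two]
  simp only [Fin.val_zero, Fin.val_one, pow_zero, pow_one]
  rw [Nat.cast_mul, Nat.cast_sub (Nat.one_le_pow _ _ Fintype.card_pos),
    Nat.cast_sub (Nat.le_self_pow two_ne_zero _)]
  push_cast
  ring

section DecidableEq

variable [DecidableEq K]

theorem card_filter_mul_eq (t : K) :
    #{p : K × K | p.1 * p.2 = t} = q - 1 + if t = 0 then q else 0 := by
  have hfiber (x : K) : #{y | x * y = t} = if x = 0 then (if t = 0 then q else 0) else 1 := by
    split_ifs with hx ht
    · simp [hx, ht]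
    · simp [hx, Ne.symm ht]
    · rw [card_eq_one]
      exact ⟨x⁻¹ * t, by ext y; simp [eq_inv_mul_iff_mul_eq₀ hx]⟩
  rw [card_filter_prod_eq_sum (fun x y : K => x * y = t)]
  simp only [hfiber]
  rw [sum_ite, filter_eq', if_pos (mem_univ _), sum_singleton, filter_ne', sum_const,
    card_erase_of_mem (mem_univ _), card_univ, smul_eq_mul, mul_one, add_comm]

theorem card_filter_mul_one_sub_eq_zero : #{a : K | a * (1 - a) = 0} = 2 := by
  have : ({a : K | a * (1 - a) = 0} : Finset K) = {0, 1} := by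
    ext a
    simp [sub_eq_zero, eq_comm (a := (1 : K))]
  rw [this, card_pair zero_ne_one]

namespace Matrix

theorem card_filter_det_eq_zero_add_card_GL (n : ℕ) :
    #{A : Matrix (Fin n) (Fin n) K | A.det = 0} + Nat.card (GL (Fin n) K) = q ^ (n * n) := by
  have hGL : Nat.card (GL (Fin n) K) = #{A : Matrix (Fin n) (Fin n) K | A.det ≠ 0} := by
    rw [Nat.card_congr (Submonoid.unitsTypeEquivIsUnitSubmonoid.toEquiv.trans
      (Equiv.subtypeEquivRight isUnit_iff_det_ne_zero)),
      Nat.card_eq_fintype_card, Fintype.card_subtype]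
  rw [hGL, card_filter_add_card_filter_not, card_univ, pow_mul]
  exact Fintype.card_fun.trans (by rw [Fintype.card_fun, Fintype.card_fin])

theorem card_filter_det_eq_zero_trace_eq_one :
    #{A : Matrix (Fin 2) (Fin 2) K | A.det = 0 ∧ A.trace = 1} = q ^ 2 + q := by
  have hparam : #{A : Matrix (Fin 2) (Fin 2) K | A.det = 0 ∧ A.trace = 1} =
      #{x : K × K × K | x.2.1 * x.2.2 = x.1 * (1 - x.1)} := by
    refine card_nbij' (fun A => (A 0 0, A 0 1, A 1 0)) (fun x => !![x.1, x.2.1; x.2.2, 1 - x.1])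
      ?_ ?_ ?_ ?_
    · intro A hA
      simp only [coe_filter, mem_univ, true_and, Set.mem_ofPred_eq, det_fin_two,
        trace_fin_two] at hA ⊢
      linear_combination -hA.1 + A 0 0 * hA.2
    · intro x hx
      simp only [coe_filter, mem_univ, true_and, Set.mem_ofPred_eq, det_fin_two_of,
        trace_fin_two_of] at hx ⊢
      exact ⟨by linear_combination -hx, add_sub_cancel _ _⟩
    · intro A hA
      simp only [coe_filter, Set.mem_ofPred_eq, mem_univ, true_and, trace_fin_two] at hA
      show !![A 0 0, A 0 1; A 1 0, 1 - A 0 0] = A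
      rw [← hA.2, add_sub_cancel_left]
      exact (eta_fin_two A).symm
    · intro x _
      simp
  rw [hparam, card_filter_prod_eq_sum (fun a (p : K × K) => p.1 * p.2 = a * (1 - a))]
  simp only [card_filter_mul_eq, sum_add_distrib, sum_const, card_univ, sum_ite,
    card_filter_mul_one_sub_eq_zero, smul_eq_mul, mul_zero, add_zero]
  obtain ⟨k, hk⟩ := Nat.exists_eq_add_one.mpr (Fintype.card_pos (α := K))
  rw [hk, Nat.add_sub_cancel]
  ring

theorem card_filter_det_ne_zero_det_one_sub_eq_zero_add :
    #{A : Matrix (Fin 2) (Fin 2) K | A.det ≠ 0 ∧ (1 - A).det = 0} +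
      #{A : Matrix (Fin 2) (Fin 2) K | A.det = 0 ∧ A.trace = 1} =
      #{A : Matrix (Fin 2) (Fin 2) K | A.det = 0} := by
  have hsingular (A : Matrix (Fin 2) (Fin 2) K) :
      (1 - A).det = 0 ∧ ¬A.det ≠ 0 ↔ A.det = 0 ∧ A.trace = 1 := by
    rw [det_one_sub_fin_two, not_not]
    constructor
    · rintro ⟨h, hdet⟩
      exact ⟨hdet, by linear_combination -h + hdet⟩
    · rintro ⟨hdet, htr⟩
      exact ⟨by linear_combination -htr + hdet, hdet⟩
  calc _ = #{A : Matrix (Fin 2) (Fin 2) K | (1 - A).det = 0 ∧ A.det ≠ 0} +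
        #{A : Matrix (Fin 2) (Fin 2) K | (1 - A).det = 0 ∧ ¬A.det ≠ 0} := by
        simp only [hsingular, and_comm]
    _ = #{A : Matrix (Fin 2) (Fin 2) K | (1 - A).det = 0} := by
        rw [← filter_filter, ← filter_filter, card_filter_add_card_filter_not]
    _ = _ := card_equiv (Equiv.subLeft 1) (by simp)

end Matrix

end DecidableEq

theorem Matrix.card_isUnit_det_one_sub_eq_zero :
    (Nat.card {A : Matrix (Fin 2) (Fin 2) K // IsUnit A ∧ (1 - A).det = 0} : ℤ) =
      (q : ℤ) ^ 3 - 2 * q := by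
  classical
  rw [Nat.card_congr (Equiv.subtypeEquivRight fun A => and_congr_left' A.isUnit_iff_det_ne_zero),
    Nat.card_eq_fintype_card, Fintype.card_subtype]
  have hsplit := card_filter_det_ne_zero_det_one_sub_eq_zero_add (K := K)
  have hsingular := card_filter_det_eq_zero_add_card_GL (K := K) 2
  rw [card_filter_det_eq_zero_trace_eq_one] at hsplit
  zify at hsplit hsingular
  rw [card_GL_fin_two] at hsingular
  linear_combination hsplit + hsingular

/-- For a prime `ℓ`, the number of matrices `A ∈ GL₂(𝔽_ℓ)` with `det(I - A) = 0`
equals `(ℓ-2)(ℓ²+ℓ) + ℓ²`. -/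
theorem stmt_1 (ℓ : ℕ) [Fact ℓ.Prime] :
    (Nat.card {A : Matrix (Fin 2) (Fin 2) (ZMod ℓ) //
        IsUnit A ∧ (1 - A).det = 0} : ℤ) =
      ((ℓ : ℤ) - 2) * ((ℓ : ℤ) ^ 2 + ℓ) + (ℓ : ℤ) ^ 2 := by
  rw [Matrix.card_isUnit_det_one_sub_eq_zero, ZMod.card]
  ring
end

section
/- For a prime ℓ, the proportion of matrices A in GL₂(𝔽_ℓ) with det(I - A) ≠ 0 equals 1 - ((ℓ-2)(ℓ²+ℓ) + ℓ²)/(ℓ(ℓ-1)²(ℓ+1)). -/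
open Finset

variable (ℓ : ℕ) [Fact ℓ.Prime]

lemma fiber_count (x t : ZMod ℓ) :
    Fintype.card {y : ZMod ℓ // x * y = t} =
      if x = 0 then (if t = 0 then ℓ else 0) else 1 := by
  split_ifs with hx ht
  · subst hx; subst ht
    rw [Fintype.card_congr (Equiv.subtypeUnivEquiv fun y => by simp)]; exact ZMod.card ℓ
  · subst hx
    rw [Fintype.card_eq_zero_iff]
    exact ⟨fun y => ht (by simpa using y.2.symm)⟩
  · rw [Fintype.card_congr (Equiv.subtypeEquivRight (q := fun y => y = x⁻¹ * t) ?_)]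
    · exact Fintype.card_subtype_eq _
    · intro y
      constructor
      · rintro rfl; field_simp
      · rintro rfl; field_simp

lemma pair_count (t : ZMod ℓ) :
    Fintype.card {p : ZMod ℓ × ZMod ℓ // p.1 * p.2 = t} =
      if t = 0 then 2 * ℓ - 1 else ℓ - 1 := by
  have h2 : 2 ≤ ℓ := (Fact.out : ℓ.Prime).two_le
  rw [Fintype.card_congr (Equiv.subtypeProdEquivSigmaSubtype fun a b => a * b = t)]
  rw [Fintype.card_sigma]
  simp_rw [fiber_count ℓ]
  rw [Finset.sum_eq_sum_sdiff_singleton_add (mem_univ (0 : ZMod ℓ))]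
  rw [Finset.sum_congr rfl (fun x hx => by
    rw [if_neg (by simpa using (mem_sdiff.mp hx).2)])]
  rw [Finset.sum_const, if_pos rfl]
  have hc : (univ \ {(0 : ZMod ℓ)}).card = ℓ - 1 := by
    rw [Finset.card_sdiff_of_subset (by simp), Finset.card_singleton, Finset.card_univ, ZMod.card]
  rw [hc]
  simp only [smul_eq_mul, mul_one]
  split_ifs <;> omega

lemma sigma_count {α : Type} [Fintype α] (g : α → ZMod ℓ) :
    Fintype.card {x : α × (ZMod ℓ × ZMod ℓ) // x.2.1 * x.2.2 = g x.1} =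
      (univ.filter (fun a => g a = 0)).card * (2 * ℓ - 1) +
      (univ.filter (fun a => ¬ g a = 0)).card * (ℓ - 1) := by
  classical
  rw [show Fintype.card {x : α × (ZMod ℓ × ZMod ℓ) // x.2.1 * x.2.2 = g x.1} =
      Fintype.card (Σ a : α, {p : ZMod ℓ × ZMod ℓ // p.1 * p.2 = g a}) from
    Fintype.card_congr (Equiv.subtypeProdEquivSigmaSubtype (fun a (p : ZMod ℓ × ZMod ℓ) => p.1 * p.2 = g a))]
  rw [Fintype.card_sigma]
  simp_rw [pair_count ℓ]
  rw [Finset.sum_ite, Finset.sum_const, Finset.sum_const, smul_eq_mul, smul_eq_mul]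

lemma det_one_sub (A : Matrix (Fin 2) (Fin 2) (ZMod ℓ)) :
    (1 - A).det = (1 - A 0 0) * (1 - A 1 1) - A 0 1 * A 1 0 := by
  rw [Matrix.det_fin_two]
  simp only [Matrix.sub_apply, Matrix.one_apply_eq, Matrix.one_apply_ne (by decide : (0 : Fin 2) ≠ 1),
    Matrix.one_apply_ne (by decide : (1 : Fin 2) ≠ 0)]
  ring

def eNQ : {A : Matrix (Fin 2) (Fin 2) (ZMod ℓ) // (1 - A).det = 0} ≃
    {x : (ZMod ℓ × ZMod ℓ) × (ZMod ℓ × ZMod ℓ) //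
      x.2.1 * x.2.2 = (1 - x.1.1) * (1 - x.1.2)} where
  toFun A := ⟨((A.1 0 0, A.1 1 1), (A.1 0 1, A.1 1 0)), by
    have h := A.2; rw [det_one_sub] at h; linear_combination -h⟩
  invFun x := ⟨!![x.1.1.1, x.1.2.1; x.1.2.2, x.1.1.2], by
    rw [det_one_sub]
    have e00 : (!![x.1.1.1, x.1.2.1; x.1.2.2, x.1.1.2]) 0 0 = x.1.1.1 := by simp
    have e01 : (!![x.1.1.1, x.1.2.1; x.1.2.2, x.1.1.2]) 0 1 = x.1.2.1 := by simp
    have e10 : (!![x.1.1.1, x.1.2.1; x.1.2.2, x.1.1.2]) 1 0 = x.1.2.2 := by simp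
    have e11 : (!![x.1.1.1, x.1.2.1; x.1.2.2, x.1.1.2]) 1 1 = x.1.1.2 := by simp
    rw [e00, e01, e10, e11]
    linear_combination -x.2⟩
  left_inv A := by
    apply Subtype.ext
    exact (Matrix.eta_fin_two A.1).symm
  right_inv x := by
    apply Subtype.ext
    simp

def eNP : {A : Matrix (Fin 2) (Fin 2) (ZMod ℓ) // A.det = 0} ≃
    {x : (ZMod ℓ × ZMod ℓ) × (ZMod ℓ × ZMod ℓ) // x.2.1 * x.2.2 = x.1.1 * x.1.2} where
  toFun A := ⟨((A.1 0 0, A.1 1 1), (A.1 0 1, A.1 1 0)), by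
    have h := A.2; rw [Matrix.det_fin_two] at h; linear_combination -h⟩
  invFun x := ⟨!![x.1.1.1, x.1.2.1; x.1.2.2, x.1.1.2], by
    rw [Matrix.det_fin_two_of]; linear_combination -x.2⟩
  left_inv A := by
    apply Subtype.ext
    exact (Matrix.eta_fin_two A.1).symm
  right_inv x := by
    apply Subtype.ext
    simp

def eNPNQ : {A : Matrix (Fin 2) (Fin 2) (ZMod ℓ) // A.det = 0 ∧ (1 - A).det = 0} ≃
    {x : ZMod ℓ × (ZMod ℓ × ZMod ℓ) // x.2.1 * x.2.2 = x.1 * (1 - x.1)} where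
  toFun A := ⟨(A.1 0 0, (A.1 0 1, A.1 1 0)), by
    have h1 := A.2.1; have h2 := A.2.2
    rw [Matrix.det_fin_two] at h1; rw [det_one_sub] at h2
    linear_combination (A.1 0 0) * (h1 - h2) - h1⟩
  invFun x := ⟨!![x.1.1, x.1.2.1; x.1.2.2, 1 - x.1.1], by
    constructor
    · rw [Matrix.det_fin_two_of]; linear_combination -x.2
    · rw [det_one_sub]
      have e00 : (!![x.1.1, x.1.2.1; x.1.2.2, 1 - x.1.1]) 0 0 = x.1.1 := by simp
      have e01 : (!![x.1.1, x.1.2.1; x.1.2.2, 1 - x.1.1]) 0 1 = x.1.2.1 := by simp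
      have e10 : (!![x.1.1, x.1.2.1; x.1.2.2, 1 - x.1.1]) 1 0 = x.1.2.2 := by simp
      have e11 : (!![x.1.1, x.1.2.1; x.1.2.2, 1 - x.1.1]) 1 1 = 1 - x.1.1 := by simp
      rw [e00, e01, e10, e11]
      linear_combination -x.2⟩
  left_inv A := by
    apply Subtype.ext
    have h1 := A.2.1; have h2 := A.2.2
    rw [Matrix.det_fin_two] at h1; rw [det_one_sub] at h2
    have hd : A.1 1 1 = 1 - A.1 0 0 := by linear_combination h1 - h2
    have he := Matrix.eta_fin_two A.1
    rw [hd] at he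
    exact he.symm
  right_inv x := by
    apply Subtype.ext
    simp

lemma card_ne (c : ZMod ℓ) : (univ.filter (fun a : ZMod ℓ => ¬ a = c)).card = ℓ - 1 := by
  rw [Finset.filter_ne' univ c, Finset.card_erase_of_mem (mem_univ c), Finset.card_univ,
    ZMod.card]

lemma card_pair_ne :
    (univ.filter (fun p : ZMod ℓ × ZMod ℓ => ¬ (1 - p.1) * (1 - p.2) = 0)).card
      = (ℓ - 1) * (ℓ - 1) := by
  have he : (univ.filter (fun p : ZMod ℓ × ZMod ℓ => ¬ (1 - p.1) * (1 - p.2) = 0))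
      = (univ.filter fun a : ZMod ℓ => ¬ a = 1) ×ˢ (univ.filter fun a : ZMod ℓ => ¬ a = 1) := by
    ext p
    simp only [Finset.mem_filter, Finset.mem_product, Finset.mem_univ, true_and,
      mul_eq_zero, sub_eq_zero, not_or]
    constructor
    · rintro ⟨h1, h2⟩; exact ⟨fun h => h1 h.symm, fun h => h2 h.symm⟩
    · rintro ⟨h1, h2⟩; exact ⟨fun h => h1 h.symm, fun h => h2 h.symm⟩
  rw [he, Finset.card_product, card_ne]

lemma card_pair_ne' :
    (univ.filter (fun p : ZMod ℓ × ZMod ℓ => ¬ p.1 * p.2 = 0)).card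
      = (ℓ - 1) * (ℓ - 1) := by
  have he : (univ.filter (fun p : ZMod ℓ × ZMod ℓ => ¬ p.1 * p.2 = 0))
      = (univ.filter fun a : ZMod ℓ => ¬ a = 0) ×ˢ (univ.filter fun a : ZMod ℓ => ¬ a = 0) := by
    ext p
    simp [Finset.mem_filter, mul_eq_zero, not_or]
  rw [he, Finset.card_product, card_ne]

lemma cNQ (k : ℕ) (hk : ℓ = k + 2) :
    Fintype.card {A : Matrix (Fin 2) (Fin 2) (ZMod ℓ) // (1 - A).det = 0} =
      (2*k+3) * (2*k+3) + ((k+1) * (k+1)) * (k+1) := by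
  rw [Fintype.card_congr (eNQ ℓ)]
  rw [sigma_count ℓ (fun p : ZMod ℓ × ZMod ℓ => (1 - p.1) * (1 - p.2))]
  have e1 : ℓ - 1 = k + 1 := by omega
  have e2 : 2*ℓ - 1 = 2*k + 3 := by omega
  have hne := card_pair_ne ℓ
  have hpart := Finset.card_filter_add_card_filter_not
    (s := (univ : Finset (ZMod ℓ × ZMod ℓ)))
    (p := fun p : ZMod ℓ × ZMod ℓ => (1 - p.1) * (1 - p.2) = 0)
  rw [Finset.card_univ, Fintype.card_prod, ZMod.card, hne, e1] at hpart
  have hx : ℓ * ℓ = (2*k+3) + (k+1)*(k+1) := by rw [hk]; ring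
  have heq : (univ.filter (fun p : ZMod ℓ × ZMod ℓ => (1 - p.1) * (1 - p.2) = 0)).card
      = 2*k+3 := Nat.add_right_cancel (hpart.trans hx)
  rw [heq, hne, e1, e2]

lemma cNP (k : ℕ) (hk : ℓ = k + 2) :
    Fintype.card {A : Matrix (Fin 2) (Fin 2) (ZMod ℓ) // A.det = 0} =
      (2*k+3) * (2*k+3) + ((k+1) * (k+1)) * (k+1) := by
  rw [Fintype.card_congr (eNP ℓ)]
  rw [sigma_count ℓ (fun p : ZMod ℓ × ZMod ℓ => p.1 * p.2)]
  have e1 : ℓ - 1 = k + 1 := by omega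
  have e2 : 2*ℓ - 1 = 2*k + 3 := by omega
  have hne := card_pair_ne' ℓ
  have hpart := Finset.card_filter_add_card_filter_not
    (s := (univ : Finset (ZMod ℓ × ZMod ℓ)))
    (p := fun p : ZMod ℓ × ZMod ℓ => p.1 * p.2 = 0)
  rw [Finset.card_univ, Fintype.card_prod, ZMod.card, hne, e1] at hpart
  have hx : ℓ * ℓ = (2*k+3) + (k+1)*(k+1) := by rw [hk]; ring
  have heq : (univ.filter (fun p : ZMod ℓ × ZMod ℓ => p.1 * p.2 = 0)).card
      = 2*k+3 := Nat.add_right_cancel (hpart.trans hx)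
  rw [heq, hne, e1, e2]

lemma cNPNQ (k : ℕ) (hk : ℓ = k + 2) :
    Fintype.card {A : Matrix (Fin 2) (Fin 2) (ZMod ℓ) // A.det = 0 ∧ (1 - A).det = 0} =
      2 * (2*k+3) + k * (k+1) := by
  rw [Fintype.card_congr (eNPNQ ℓ)]
  rw [sigma_count ℓ (fun a : ZMod ℓ => a * (1 - a))]
  have e1 : ℓ - 1 = k + 1 := by omega
  have e2 : 2*ℓ - 1 = 2*k + 3 := by omega
  have hne : (univ.filter (fun a : ZMod ℓ => ¬ a * (1 - a) = 0)).card = k := by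
    have he : (univ.filter (fun a : ZMod ℓ => ¬ a * (1 - a) = 0)) = univ \ {0, 1} := by
      ext a
      simp only [Finset.mem_filter, Finset.mem_univ, true_and, Finset.mem_sdiff,
        Finset.mem_insert, Finset.mem_singleton, mul_eq_zero, sub_eq_zero, not_or]
      constructor
      · rintro ⟨h1, h2⟩; exact ⟨h1, fun h => h2 (h ▸ rfl)⟩
      · rintro ⟨h1, h2⟩; exact ⟨h1, fun h => h2 h.symm⟩
    rw [he, Finset.card_sdiff_of_subset (Finset.subset_univ _), Finset.card_univ, ZMod.card]
    have h01 : (0 : ZMod ℓ) ∉ ({1} : Finset (ZMod ℓ)) := by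
      simp only [Finset.mem_singleton]
      exact fun h => (zero_ne_one (α := ZMod ℓ)) h
    rw [Finset.card_insert_of_notMem h01, Finset.card_singleton]
    omega
  have hpart := Finset.card_filter_add_card_filter_not
    (s := (univ : Finset (ZMod ℓ)))
    (p := fun a : ZMod ℓ => a * (1 - a) = 0)
  rw [Finset.card_univ, ZMod.card, hne] at hpart
  have heq : (univ.filter (fun a : ZMod ℓ => a * (1 - a) = 0)).card = 2 := by omega
  rw [heq, hne, e1, e2]

lemma card_partition {α : Type} [Fintype α] (p q : α → Prop)
    [DecidablePred p] [DecidablePred q] :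
    Fintype.card {x // p x ∧ q x} + Fintype.card {x // p x ∧ ¬ q x} =
      Fintype.card {x // p x} := by
  simp only [Fintype.card_subtype, ← Finset.filter_filter]
  exact Finset.card_filter_add_card_filter_not (p := q)

lemma card_mat (k : ℕ) (hk : ℓ = k + 2) :
    Fintype.card (Matrix (Fin 2) (Fin 2) (ZMod ℓ)) = (k+2)*(k+2)*(k+2)*(k+2) := by
  rw [Fintype.card_congr (Matrix.of (m := Fin 2) (n := Fin 2) (α := ZMod ℓ)).symm]
  rw [Fintype.card_fun, Fintype.card_fun, ZMod.card, Fintype.card_fin, hk]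
  ring

theorem stmt_2' :
    (Nat.card {A : Matrix (Fin 2) (Fin 2) (ZMod ℓ) //
          IsUnit A ∧ (1 - A).det ≠ 0} : ℚ) /
        (Nat.card {A : Matrix (Fin 2) (Fin 2) (ZMod ℓ) // IsUnit A} : ℚ) =
      1 - (((ℓ : ℚ) - 2) * ((ℓ : ℚ) ^ 2 + ℓ) + (ℓ : ℚ) ^ 2) /
        ((ℓ : ℚ) * ((ℓ : ℚ) - 1) ^ 2 * ((ℓ : ℚ) + 1)) := by
  obtain ⟨k, hk⟩ : ∃ k, ℓ = k + 2 := ⟨ℓ - 2, by have := (Fact.out : ℓ.Prime).two_le; omega⟩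
  have hnum : Nat.card {A : Matrix (Fin 2) (Fin 2) (ZMod ℓ) // IsUnit A ∧ (1 - A).det ≠ 0}
      = Fintype.card {A : Matrix (Fin 2) (Fin 2) (ZMod ℓ) // ¬ A.det = 0 ∧ ¬ (1 - A).det = 0} := by
    rw [Nat.card_congr (Equiv.subtypeEquivRight (q := fun A : Matrix (Fin 2) (Fin 2) (ZMod ℓ) =>
      ¬ A.det = 0 ∧ ¬ (1 - A).det = 0) (fun A => by
        simp [Matrix.isUnit_iff_isUnit_det, isUnit_iff_ne_zero]))]
    exact Nat.card_eq_fintype_card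
  have hden : Nat.card {A : Matrix (Fin 2) (Fin 2) (ZMod ℓ) // IsUnit A}
      = Fintype.card {A : Matrix (Fin 2) (Fin 2) (ZMod ℓ) // ¬ A.det = 0} := by
    rw [Nat.card_congr (Equiv.subtypeEquivRight (q := fun A : Matrix (Fin 2) (Fin 2) (ZMod ℓ) =>
      ¬ A.det = 0) (fun A => by
        simp [Matrix.isUnit_iff_isUnit_det, isUnit_iff_ne_zero]))]
    exact Nat.card_eq_fintype_card
  have h1 := card_partition (fun A : Matrix (Fin 2) (Fin 2) (ZMod ℓ) => ¬ A.det = 0)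
    (fun A => (1 - A).det = 0)
  have h2 := card_partition (fun A : Matrix (Fin 2) (Fin 2) (ZMod ℓ) => (1 - A).det = 0)
    (fun A => A.det = 0)
  have h3 : Fintype.card {A : Matrix (Fin 2) (Fin 2) (ZMod ℓ) // A.det = 0}
      + Fintype.card {A : Matrix (Fin 2) (Fin 2) (ZMod ℓ) // ¬ A.det = 0}
      = Fintype.card (Matrix (Fin 2) (Fin 2) (ZMod ℓ)) := by
    simp only [Fintype.card_subtype]
    rw [Finset.card_filter_add_card_filter_not, Finset.card_univ]
  -- and_comm swaps
  have s1 : Fintype.card {A : Matrix (Fin 2) (Fin 2) (ZMod ℓ) // ¬ A.det = 0 ∧ (1 - A).det = 0}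
      = Fintype.card {A : Matrix (Fin 2) (Fin 2) (ZMod ℓ) // (1 - A).det = 0 ∧ ¬ A.det = 0} :=
    Fintype.card_congr (Equiv.subtypeEquivRight (fun A => and_comm))
  have s2 : Fintype.card {A : Matrix (Fin 2) (Fin 2) (ZMod ℓ) // (1 - A).det = 0 ∧ A.det = 0}
      = Fintype.card {A : Matrix (Fin 2) (Fin 2) (ZMod ℓ) // A.det = 0 ∧ (1 - A).det = 0} :=
    Fintype.card_congr (Equiv.subtypeEquivRight (fun A => and_comm))
  rw [s1] at h1
  rw [s2, cNPNQ ℓ k hk, cNQ ℓ k hk] at h2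
  rw [cNP ℓ k hk, card_mat ℓ k hk] at h3
  -- cast to ℚ
  have h1Q : (Fintype.card {A : Matrix (Fin 2) (Fin 2) (ZMod ℓ) // (1 - A).det = 0 ∧ ¬ A.det = 0} : ℚ)
      + (Fintype.card {A : Matrix (Fin 2) (Fin 2) (ZMod ℓ) // ¬ A.det = 0 ∧ ¬ (1 - A).det = 0} : ℚ)
      = (Fintype.card {A : Matrix (Fin 2) (Fin 2) (ZMod ℓ) // ¬ A.det = 0} : ℚ) := by
    exact_mod_cast congrArg (Nat.cast : ℕ → ℚ) h1
  have h2Q : (2 * ((2:ℚ)*k+3) + k * (k+1))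
      + (Fintype.card {A : Matrix (Fin 2) (Fin 2) (ZMod ℓ) // (1 - A).det = 0 ∧ ¬ A.det = 0} : ℚ)
      = ((2:ℚ)*k+3) * (2*k+3) + ((k+1) * (k+1)) * (k+1) := by
    have := congrArg (Nat.cast : ℕ → ℚ) h2
    push_cast at this
    linarith [this]
  have h3Q : (((2:ℚ)*k+3) * (2*k+3) + ((k+1) * (k+1)) * (k+1))
      + (Fintype.card {A : Matrix (Fin 2) (Fin 2) (ZMod ℓ) // ¬ A.det = 0} : ℚ)
      = ((k:ℚ)+2)*((k:ℚ)+2)*((k:ℚ)+2)*((k:ℚ)+2) := by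
    have := congrArg (Nat.cast : ℕ → ℚ) h3
    push_cast at this
    linarith [this]
  have haQ : (Fintype.card {A : Matrix (Fin 2) (Fin 2) (ZMod ℓ) // ¬ A.det = 0 ∧ ¬ (1 - A).det = 0} : ℚ)
      = (k:ℚ)^4 + 6*k^3 + 11*k^2 + 7*k + 2 := by
    linear_combination h1Q - h2Q + h3Q
  have hbQ : (Fintype.card {A : Matrix (Fin 2) (Fin 2) (ZMod ℓ) // ¬ A.det = 0} : ℚ)
      = ((k:ℚ)+1)^2 * ((k:ℚ)+2) * ((k:ℚ)+3) := by
    linear_combination h3Q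
  have hlQ : (ℓ : ℚ) = (k:ℚ) + 2 := by rw [hk]; push_cast; ring
  rw [hnum, hden, haQ, hbQ, hlQ]
  have e1 : ((k:ℚ)+1) ≠ 0 := by positivity
  have e2 : ((k:ℚ)+2) ≠ 0 := by positivity
  have e3 : ((k:ℚ)+3) ≠ 0 := by positivity
  have e4 : ((k:ℚ)+2) - 1 ≠ 0 := by
    have : ((k:ℚ)+2) - 1 = (k:ℚ)+1 := by ring
    rw [this]; exact e1
  field_simp
  ring

/-- For a prime `ℓ`, the proportion of matrices `A ∈ GL₂(𝔽_ℓ)` with `det(I - A) ≠ 0`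
equals `1 - ((ℓ-2)(ℓ²+ℓ) + ℓ²)/(ℓ(ℓ-1)²(ℓ+1))`. -/
theorem stmt_2 (ℓ : ℕ) [Fact ℓ.Prime] :
    (Nat.card {A : Matrix (Fin 2) (Fin 2) (ZMod ℓ) //
          IsUnit A ∧ (1 - A).det ≠ 0} : ℚ) /
        (Nat.card {A : Matrix (Fin 2) (Fin 2) (ZMod ℓ) // IsUnit A} : ℚ) =
      1 - (((ℓ : ℚ) - 2) * ((ℓ : ℚ) ^ 2 + ℓ) + (ℓ : ℚ) ^ 2) /
        ((ℓ : ℚ) * ((ℓ : ℚ) - 1) ^ 2 * ((ℓ : ℚ) + 1)) := by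
  exact stmt_2' ℓ
end
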